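/- arXiv:2003.07487 — 6 statements merged into one kernel-verified Lean document; each statement's English description precedes it below -/
import Mathlib

section
/- Let R_A ⊆ (Fin 6 → Bool) be the set {100011, 010101, 001110}, let R_B ⊆ (Fin 6 → Bool) be the complement of {000000, 000111, 111000, 111111}, let ι : Bool → ZMod 3 send false ↦ 0 and true ↦ 1, let R_C ⊆ (Fin 6 → ZMod 3) be the smallest set containing {ι ∘ t : t ∈ R_A} and closed under the pointwise operation (x, y, z) ↦ x − y + z, and let g : ZMod 3 → Bool send 1 ↦ true and 0, 2 ↦ false. Then for every tuple t ∈ R_C, the tuple g ∘ t lies in R_B. (Together with the trivial containment {ι ∘ t : t ∈ R_A} ⊆ R_C, this says the affine structure ({0,1,2}, R_C) is sandwiched between ({0,1}, R_A) and ({0,1}, R_B).) -/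
/-- The relation `R_A = {100011, 010101, 001110}` as Boolean 6-tuples. -/
def RA : Set (Fin 6 → Bool) :=
  {![true, false, false, false, true, true],
   ![false, true, false, true, false, true],
   ![false, false, true, true, true, false]}

/-- The relation `R_B`, the complement of `{000000, 000111, 111000, 111111}`. -/
def RB : Set (Fin 6 → Bool) :=
  ({![false, false, false, false, false, false],
    ![false, false, false, true, true, true],
    ![true, true, true, false, false, false],
    ![true, true, true, true, true, true]} : Set (Fin 6 → Bool))ᶜ

/-- The inclusion `ι : Bool → ZMod 3`, `false ↦ 0`, `true ↦ 1`. -/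
def iota : Bool → ZMod 3 := fun b => if b then 1 else 0

/-- `R_C` is the smallest subset of `(Fin 6 → ZMod 3)` containing `{ι ∘ t : t ∈ R_A}`
and closed under the pointwise operation `(x, y, z) ↦ x - y + z`. -/
inductive RC : (Fin 6 → ZMod 3) → Prop
  | base (t : Fin 6 → Bool) (ht : t ∈ RA) : RC (fun i => iota (t i))
  | step (t₁ t₂ t₃ : Fin 6 → ZMod 3) (h₁ : RC t₁) (h₂ : RC t₂) (h₃ : RC t₃) :
      RC (fun i => t₁ i - t₂ i + t₃ i)

/-- The map `g : ZMod 3 → Bool`, `1 ↦ true`, `0, 2 ↦ false`. -/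
def gMap : ZMod 3 → Bool := fun x => if x = 1 then true else false

def vA : Fin 6 → ZMod 3 := ![1, 0, 0, 0, 1, 1]
def vB : Fin 6 → ZMod 3 := ![0, 1, 0, 1, 0, 1]
def vC : Fin 6 → ZMod 3 := ![0, 0, 1, 1, 1, 0]

lemma key_check : ∀ α β : ZMod 3,
    (fun i => gMap (α * vA i + β * vB i + (1 - α - β) * vC i)) ∈ RB := by
  intro α β
  simp only [RB, Set.mem_compl_iff, Set.mem_insert_iff, Set.mem_singleton_iff]
  revert α β
  decide

theorem sandwich_homomorphism :
    ∀ t : Fin 6 → ZMod 3, RC t → (fun i => gMap (t i)) ∈ RB := by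
  intro t h
  have key : ∃ α β : ZMod 3, ∀ i, t i = α * vA i + β * vB i + (1 - α - β) * vC i := by
    induction h with
    | base s hs =>
      rcases hs with h | h | h
      · exact ⟨1, 0, by subst h; decide⟩
      · exact ⟨0, 1, by subst h; decide⟩
      · exact ⟨0, 0, by simp only [Set.mem_singleton_iff] at h; subst h; decide⟩
    | step t₁ t₂ t₃ h₁ h₂ h₃ ih₁ ih₂ ih₃ =>
      obtain ⟨α₁, β₁, e₁⟩ := ih₁
      obtain ⟨α₂, β₂, e₂⟩ := ih₂
      obtain ⟨α₃, β₃, e₃⟩ := ih₃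
      exact ⟨α₁ - α₂ + α₃, β₁ - β₂ + β₃, fun i => by show t₁ i - t₂ i + t₃ i = _; rw [e₁ i, e₂ i, e₃ i]; ring⟩
  obtain ⟨α, β, hαβ⟩ := key
  have : (fun i => gMap (t i))
      = (fun i => gMap (α * vA i + β * vB i + (1 - α - β) * vC i)) :=
    funext fun i => by rw [hαβ i]
  rw [this]
  exact key_check α β
end

section
/- Let R_A ⊆ (Fin 6 → Bool) be the set {100011, 010101, 001110}, let ι : Bool → ZMod 3 send false ↦ 0 and true ↦ 1, and let R_C ⊆ (Fin 6 → ZMod 3) be the smallest set containing {ι ∘ t : t ∈ R_A} and closed under the pointwise operation (x, y, z) ↦ x − y + z. Then R_C equals the set of all tuples (x₁, …, x₆) ∈ (ZMod 3)⁶ satisfying x₁ + x₂ + x₃ = 1, x₁ + x₄ = 1, x₂ + x₅ = 1, and x₃ + x₆ = 1; equivalently, R_C equals the explicit nine-element set {100011, 010101, 001110, 220221, 202212, 022122, 211200, 121020, 112002} (digits read in ZMod 3). -/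
lemma RC_a : RC ![1,0,0,0,1,1] := by
  have h := RC.base ![true, false, false, false, true, true] (Or.inl rfl)
  convert h using 1
  funext i; fin_cases i <;> rfl

lemma RC_b : RC ![0,1,0,1,0,1] := by
  have h := RC.base ![false, true, false, true, false, true] (Or.inr (Or.inl rfl))
  convert h using 1
  funext i; fin_cases i <;> rfl

lemma RC_c : RC ![0,0,1,1,1,0] := by
  have h := RC.base ![false, false, true, true, true, false] (Or.inr (Or.inr rfl))
  convert h using 1
  funext i; fin_cases i <;> rfl

lemma RC_cond : ∀ t, RC t →
    t 0 + t 1 + t 2 = 1 ∧ t 0 + t 3 = 1 ∧ t 1 + t 4 = 1 ∧ t 2 + t 5 = 1 := by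
  intro t h
  induction h with
  | base t ht =>
      rcases ht with rfl | rfl | rfl <;> refine ⟨?_, ?_, ?_, ?_⟩ <;> decide
  | step t₁ t₂ t₃ h₁ h₂ h₃ ih₁ ih₂ ih₃ =>
      obtain ⟨a1, a2, a3, a4⟩ := ih₁
      obtain ⟨b1, b2, b3, b4⟩ := ih₂
      obtain ⟨c1, c2, c3, c4⟩ := ih₃
      exact ⟨by linear_combination a1 - b1 + c1, by linear_combination a2 - b2 + c2,
        by linear_combination a3 - b3 + c3, by linear_combination a4 - b4 + c4⟩

theorem RC_descriptions :
    {t | RC t} =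
      {x : Fin 6 → ZMod 3 |
        x 0 + x 1 + x 2 = 1 ∧ x 0 + x 3 = 1 ∧ x 1 + x 4 = 1 ∧ x 2 + x 5 = 1} ∧
    {t | RC t} =
      ({![1,0,0,0,1,1], ![0,1,0,1,0,1], ![0,0,1,1,1,0],
        ![2,2,0,2,2,1], ![2,0,2,2,1,2], ![0,2,2,1,2,2],
        ![2,1,1,2,0,0], ![1,2,1,0,2,0], ![1,1,2,0,0,2]} : Set (Fin 6 → ZMod 3)) := by
  have hnine : ∀ x ∈ ({![1,0,0,0,1,1], ![0,1,0,1,0,1], ![0,0,1,1,1,0],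
        ![2,2,0,2,2,1], ![2,0,2,2,1,2], ![0,2,2,1,2,2],
        ![2,1,1,2,0,0], ![1,2,1,0,2,0], ![1,1,2,0,0,2]} : Set (Fin 6 → ZMod 3)), RC x := by
    intro x hx
    rcases hx with rfl | rfl | rfl | rfl | rfl | rfl | rfl | rfl | rfl
    · exact RC_a
    · exact RC_b
    · exact RC_c
    · have h := RC.step _ _ _ RC_a RC_b RC_a
      convert h using 1; funext i; fin_cases i <;> decide
    · have h := RC.step _ _ _ RC_a RC_c RC_a
      convert h using 1; funext i; fin_cases i <;> decide
    · have h := RC.step _ _ _ RC_b RC_c RC_b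
      convert h using 1; funext i; fin_cases i <;> decide
    · have h := RC.step _ _ _ RC_b RC_a RC_c
      convert h using 1; funext i; fin_cases i <;> decide
    · have h := RC.step _ _ _ RC_a RC_b RC_c
      convert h using 1; funext i; fin_cases i <;> decide
    · have h := RC.step _ _ _ RC_a RC_c RC_b
      convert h using 1; funext i; fin_cases i <;> decide
  have hcond : ∀ x : Fin 6 → ZMod 3,
      (x 0 + x 1 + x 2 = 1 ∧ x 0 + x 3 = 1 ∧ x 1 + x 4 = 1 ∧ x 2 + x 5 = 1) →
      x ∈ ({![1,0,0,0,1,1], ![0,1,0,1,0,1], ![0,0,1,1,1,0],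
        ![2,2,0,2,2,1], ![2,0,2,2,1,2], ![0,2,2,1,2,2],
        ![2,1,1,2,0,0], ![1,2,1,0,2,0], ![1,1,2,0,0,2]} : Set (Fin 6 → ZMod 3)) := by
    intro x ⟨h1, h2, h3, h4⟩
    have key : ∀ z : ZMod 3, z = 0 ∨ z = 1 ∨ z = 2 := by decide
    have e2 : x 2 = 1 - x 0 - x 1 := by linear_combination h1
    have e3 : x 3 = 1 - x 0 := by linear_combination h2
    have e4 : x 4 = 1 - x 1 := by linear_combination h3
    have e5 : x 5 = 1 - x 2 := by linear_combination h4
    rcases key (x 0) with h0 | h0 | h0 <;> rcases key (x 1) with h1' | h1' | h1'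
    · have hv : x = ![0,0,1,1,1,0] := by
        funext i; fin_cases i
        · exact h0
        · exact h1'
        · show x 2 = _; rw [e2, h0, h1']; decide
        · show x 3 = _; rw [e3, h0]; decide
        · show x 4 = _; rw [e4, h1']; decide
        · show x 5 = _; rw [e5, e2, h0, h1']; decide
      exact Or.inr (Or.inr (Or.inl hv))
    · have hv : x = ![0,1,0,1,0,1] := by
        funext i; fin_cases i
        · exact h0
        · exact h1'
        · show x 2 = _; rw [e2, h0, h1']; decide
        · show x 3 = _; rw [e3, h0]; decide
        · show x 4 = _; rw [e4, h1']; decide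
        · show x 5 = _; rw [e5, e2, h0, h1']; decide
      exact Or.inr (Or.inl hv)
    · have hv : x = ![0,2,2,1,2,2] := by
        funext i; fin_cases i
        · exact h0
        · exact h1'
        · show x 2 = _; rw [e2, h0, h1']; decide
        · show x 3 = _; rw [e3, h0]; decide
        · show x 4 = _; rw [e4, h1']; decide
        · show x 5 = _; rw [e5, e2, h0, h1']; decide
      exact Or.inr (Or.inr (Or.inr (Or.inr (Or.inr (Or.inl hv)))))
    · have hv : x = ![1,0,0,0,1,1] := by
        funext i; fin_cases i
        · exact h0
        · exact h1'
        · show x 2 = _; rw [e2, h0, h1']; decide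
        · show x 3 = _; rw [e3, h0]; decide
        · show x 4 = _; rw [e4, h1']; decide
        · show x 5 = _; rw [e5, e2, h0, h1']; decide
      exact Or.inl hv
    · have hv : x = ![1,1,2,0,0,2] := by
        funext i; fin_cases i
        · exact h0
        · exact h1'
        · show x 2 = _; rw [e2, h0, h1']; decide
        · show x 3 = _; rw [e3, h0]; decide
        · show x 4 = _; rw [e4, h1']; decide
        · show x 5 = _; rw [e5, e2, h0, h1']; decide
      exact Or.inr (Or.inr (Or.inr (Or.inr (Or.inr (Or.inr (Or.inr (Or.inr (hv))))))))
    · have hv : x = ![1,2,1,0,2,0] := by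
        funext i; fin_cases i
        · exact h0
        · exact h1'
        · show x 2 = _; rw [e2, h0, h1']; decide
        · show x 3 = _; rw [e3, h0]; decide
        · show x 4 = _; rw [e4, h1']; decide
        · show x 5 = _; rw [e5, e2, h0, h1']; decide
      exact Or.inr (Or.inr (Or.inr (Or.inr (Or.inr (Or.inr (Or.inr (Or.inl hv)))))))
    · have hv : x = ![2,0,2,2,1,2] := by
        funext i; fin_cases i
        · exact h0
        · exact h1'
        · show x 2 = _; rw [e2, h0, h1']; decide
        · show x 3 = _; rw [e3, h0]; decide
        · show x 4 = _; rw [e4, h1']; decide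
        · show x 5 = _; rw [e5, e2, h0, h1']; decide
      exact Or.inr (Or.inr (Or.inr (Or.inr (Or.inl hv))))
    · have hv : x = ![2,1,1,2,0,0] := by
        funext i; fin_cases i
        · exact h0
        · exact h1'
        · show x 2 = _; rw [e2, h0, h1']; decide
        · show x 3 = _; rw [e3, h0]; decide
        · show x 4 = _; rw [e4, h1']; decide
        · show x 5 = _; rw [e5, e2, h0, h1']; decide
      exact Or.inr (Or.inr (Or.inr (Or.inr (Or.inr (Or.inr (Or.inl hv))))))
    · have hv : x = ![2,2,0,2,2,1] := by
        funext i; fin_cases i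
        · exact h0
        · exact h1'
        · show x 2 = _; rw [e2, h0, h1']; decide
        · show x 3 = _; rw [e3, h0]; decide
        · show x 4 = _; rw [e4, h1']; decide
        · show x 5 = _; rw [e5, e2, h0, h1']; decide
      exact Or.inr (Or.inr (Or.inr (Or.inl hv)))
  constructor
  · ext x
    exact ⟨fun h => RC_cond x h, fun h => hnine x (hcond x h)⟩
  · ext x
    exact ⟨fun h => hcond x (RC_cond x h), fun h => hnine x h⟩
end

section
/- Let R_A ⊆ (Fin 6 → Bool) be the set {100011, 010101, 001110} and let R_B ⊆ (Fin 6 → Bool) be the complement of {000000, 000111, 111000, 111111}. Then for every set D of Boolean 6-tuples with R_A ⊆ D ⊆ R_B, the set D is not closed under any of the following pointwise operations: the binary meet (x, y) ↦ x ∧ y; the binary join (x, y) ↦ x ∨ y; the ternary minority operation (x, y, z) ↦ x XOR y XOR z; the ternary majority operation (x, y, z) ↦ (x ∧ y) ∨ (y ∧ z) ∨ (x ∧ z). Moreover D contains neither the constant-false tuple 000000 nor the constant-true tuple 111111 (so D is not preserved by either constant unary operation). -/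
/-- A set of Boolean 6-tuples is closed under a binary Boolean operation. -/
def Closed2 (D : Set (Fin 6 → Bool)) (p : Bool → Bool → Bool) : Prop :=
  ∀ t₁ ∈ D, ∀ t₂ ∈ D, (fun i => p (t₁ i) (t₂ i)) ∈ D

/-- A set of Boolean 6-tuples is closed under a ternary Boolean operation. -/
def Closed3 (D : Set (Fin 6 → Bool)) (p : Bool → Bool → Bool → Bool) : Prop :=
  ∀ t₁ ∈ D, ∀ t₂ ∈ D, ∀ t₃ ∈ D, (fun i => p (t₁ i) (t₂ i) (t₃ i)) ∈ D

theorem no_schaefer_polymorphism_between (D : Set (Fin 6 → Bool))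
    (hAD : RA ⊆ D) (hDB : D ⊆ RB) :
    ¬ Closed2 D (fun x y => x && y) ∧
    ¬ Closed2 D (fun x y => x || y) ∧
    ¬ Closed3 D (fun x y z => xor x (xor y z)) ∧
    ¬ Closed3 D (fun x y z => (x && y) || (y && z) || (x && z)) ∧
    (fun _ : Fin 6 => false) ∉ D ∧
    (fun _ : Fin 6 => true) ∉ D := by
  have h1 : ![true, false, false, false, true, true] ∈ D := hAD (by simp [RA])
  have h2 : ![false, true, false, true, false, true] ∈ D := hAD (by simp [RA])
  have h3 : ![false, false, true, true, true, false] ∈ D := hAD (by simp [RA])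
  refine ⟨?_, ?_, ?_, ?_, ?_, ?_⟩
  · intro hC
    have := hDB (hC _ (hC _ h1 _ h2) _ h3)
    apply this
    simp only [RB, Set.mem_insert_iff, Set.mem_singleton_iff]
    left; funext i; fin_cases i <;> rfl
  · intro hC
    have := hDB (hC _ (hC _ h1 _ h2) _ h3)
    apply this
    simp only [RB, Set.mem_insert_iff, Set.mem_singleton_iff]
    right; right; right; funext i; fin_cases i <;> rfl
  · intro hC
    have := hDB (hC _ h1 _ h2 _ h3)
    apply this
    simp only [RB, Set.mem_insert_iff, Set.mem_singleton_iff]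
    right; right; left; funext i; fin_cases i <;> rfl
  · intro hC
    have := hDB (hC _ h1 _ h2 _ h3)
    apply this
    simp only [RB, Set.mem_insert_iff, Set.mem_singleton_iff]
    right; left; funext i; fin_cases i <;> rfl
  · intro h
    apply hDB h
    simp only [RB, Set.mem_insert_iff, Set.mem_singleton_iff]
    left; funext i; fin_cases i <;> rfl
  · intro h
    apply hDB h
    simp only [RB, Set.mem_insert_iff, Set.mem_singleton_iff]
    right; right; right; funext i; fin_cases i <;> rfl
end

section
/- Let R_A ⊆ (Fin 6 → Bool) be the set {100011, 010101, 001110} and let R_B ⊆ (Fin 6 → Bool) be the complement of {000000, 000111, 111000, 111111}. Then there exist no set D ⊆ (Fin 6 → Bool) and functions f, h : Bool → Bool such that: (i) for every t ∈ R_A, f ∘ t ∈ D; (ii) for every t ∈ D, h ∘ t ∈ R_B; and (iii) D is closed under at least one of the following pointwise operations: the constant-false unary operation, the constant-true unary operation, binary meet (x,y) ↦ x ∧ y, binary join (x,y) ↦ x ∨ y, the ternary minority operation (x,y,z) ↦ x XOR y XOR z, or the ternary majority operation (x,y,z) ↦ (x ∧ y) ∨ (y ∧ z) ∨ (x ∧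 z). -/
/-- A set of Boolean 6-tuples is closed under a unary Boolean operation. -/
def Closed1 (D : Set (Fin 6 → Bool)) (p : Bool → Bool) : Prop :=
  ∀ t ∈ D, (fun i => p (t i)) ∈ D

lemma bad_notin (h : Bool → Bool) (x y : Bool) :
    (fun i => h (![x, x, x, y, y, y] i)) ∉ RB := by
  have e : (fun i => h (![x, x, x, y, y, y] i)) = ![h x, h x, h x, h y, h y, h y] := by
    funext i; fin_cases i <;> rfl
  rw [e]
  intro hm
  apply hm
  cases hx : h x <;> cases hy : h y <;>
    simp [Set.mem_insert_iff, Set.mem_singleton_iff]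

lemma contra_of_mem (D : Set (Fin 6 → Bool)) (h : Bool → Bool)
    (hB : ∀ t ∈ D, (fun i => h (t i)) ∈ RB)
    (x y : Bool) (hm : ![x, x, x, y, y, y] ∈ D) : False :=
  bad_notin h x y (hB _ hm)

lemma closure_contra (D : Set (Fin 6 → Bool)) (h : Bool → Bool)
    (hB : ∀ t ∈ D, (fun i => h (t i)) ∈ RB)
    (A B C : Fin 6 → Bool) (hAm : A ∈ D) (hBm : B ∈ D) (hCm : C ∈ D)
    (hcl : Closed1 D (fun _ => false) ∨
       Closed1 D (fun _ => true) ∨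
       Closed2 D (fun x y => x && y) ∨
       Closed2 D (fun x y => x || y) ∨
       Closed3 D (fun x y z => xor x (xor y z)) ∨
       Closed3 D (fun x y z => (x && y) || (y && z) || (x && z)))
    (hset : (A = ![true, false, false, false, true, true] ∧
             B = ![false, true, false, true, false, true] ∧
             C = ![false, false, true, true, true, false]) ∨
            (A = ![false, true, true, true, false, false] ∧
             B = ![true, false, true, false, true, false] ∧
             C = ![true, true, false, false, false, true])) : False := by
  rcases hcl with hc | hc | hc | hc | hc | hc
  · -- constant false
    have m := hc A hAm
    have e : (fun i => (fun _ => false) (A i)) = ![false, false, false, false, false, false] := by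
      funext i; fin_cases i <;> rfl
    rw [e] at m
    exact contra_of_mem D h hB false false m
  · -- constant true
    have m := hc A hAm
    have e : (fun i => (fun _ => true) (A i)) = ![true, true, true, true, true, true] := by
      funext i; fin_cases i <;> rfl
    rw [e] at m
    exact contra_of_mem D h hB true true m
  · -- and
    have m1 := hc A hAm B hBm
    have m2 := hc _ m1 C hCm
    have e : (fun i => (fun i => A i && B i) i && C i) =
        ![false, false, false, false, false, false] := by
      rcases hset with ⟨rfl, rfl, rfl⟩ | ⟨rfl, rfl, rfl⟩ <;> (funext i; fin_cases i <;> rfl)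
    rw [e] at m2
    exact contra_of_mem D h hB false false m2
  · -- or
    have m1 := hc A hAm B hBm
    have m2 := hc _ m1 C hCm
    have e : (fun i => (fun i => A i || B i) i || C i) =
        ![true, true, true, true, true, true] := by
      rcases hset with ⟨rfl, rfl, rfl⟩ | ⟨rfl, rfl, rfl⟩ <;> (funext i; fin_cases i <;> rfl)
    rw [e] at m2
    exact contra_of_mem D h hB true true m2
  · -- minority (xor)
    have m := hc A hAm B hBm C hCm
    rcases hset with ⟨rfl, rfl, rfl⟩ | ⟨rfl, rfl, rfl⟩
    · have e : (fun i => xor (![true, false, false, false, true, true] i)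
          (xor (![false, true, false, true, false, true] i)
            (![false, false, true, true, true, false] i))) =
          ![true, true, true, false, false, false] := by
        funext i; fin_cases i <;> rfl
      rw [e] at m
      exact contra_of_mem D h hB true false m
    · have e : (fun i => xor (![false, true, true, true, false, false] i)
          (xor (![true, false, true, false, true, false] i)
            (![true, true, false, false, false, true] i))) =
          ![false, false, false, true, true, true] := by
        funext i; fin_cases i <;> rfl
      rw [e] at m
      exact contra_of_mem D h hB false true m
  · -- majority
    have m := hc A hAm B hBm C hCm
    rcases hset with ⟨rfl, rfl, rfl⟩ | ⟨rfl, rfl, rfl⟩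
    · have e : (fun i => (![true, false, false, false, true, true] i &&
            ![false, true, false, true, false, true] i) ||
          (![false, true, false, true, false, true] i &&
            ![false, false, true, true, true, false] i) ||
          (![true, false, false, false, true, true] i &&
            ![false, false, true, true, true, false] i)) =
          ![false, false, false, true, true, true] := by
        funext i; fin_cases i <;> rfl
      rw [e] at m
      exact contra_of_mem D h hB false true m
    · have e : (fun i => (![false, true, true, true, false, false] i &&
            ![true, false, true, false, true, false] i) ||
          (![true, false, true, false, true, false] i &&
            ![true, true, false, false, false, true] i) ||
          (![false, true, true, true, false, false] i &&
            ![true, true, false, false, false, true] i)) =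
          ![true, true, true, false, false, false] := by
        funext i; fin_cases i <;> rfl
      rw [e] at m
      exact contra_of_mem D h hB true false m

theorem no_boolean_tractable_sandwich :
    ¬ ∃ (D : Set (Fin 6 → Bool)) (f h : Bool → Bool),
      (∀ t ∈ RA, (fun i => f (t i)) ∈ D) ∧
      (∀ t ∈ D, (fun i => h (t i)) ∈ RB) ∧
      (Closed1 D (fun _ => false) ∨
       Closed1 D (fun _ => true) ∨
       Closed2 D (fun x y => x && y) ∨
       Closed2 D (fun x y => x || y) ∨
       Closed3 D (fun x y z => xor x (xor y z)) ∨
       Closed3 D (fun x y z => (x && y) || (y && z) || (x && z))) := by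
  rintro ⟨D, f, h, hA, hB, hcl⟩
  have ha := hA ![true, false, false, false, true, true] (by left; rfl)
  have hb := hA ![false, true, false, true, false, true] (by right; left; rfl)
  have hc := hA ![false, false, true, true, true, false] (by right; right; rfl)
  cases hf : f false <;> cases ht : f true
  · -- f constant false
    have e : (fun i => f (![true, false, false, false, true, true] i)) =
        ![false, false, false, false, false, false] := by
      funext i; fin_cases i <;> first | exact hf | exact ht
    rw [e] at ha
    exact contra_of_mem D h hB false false ha
  · -- f = id
    have ea : (fun i => f (![true, false, false, false, true, true] i)) =
        ![true, false, false, false, true, true] := by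
      funext i; fin_cases i <;> first | exact hf | exact ht
    have eb : (fun i => f (![false, true, false, true, false, true] i)) =
        ![false, true, false, true, false, true] := by
      funext i; fin_cases i <;> first | exact hf | exact ht
    have ec : (fun i => f (![false, false, true, true, true, false] i)) =
        ![false, false, true, true, true, false] := by
      funext i; fin_cases i <;> first | exact hf | exact ht
    rw [ea] at ha; rw [eb] at hb; rw [ec] at hc
    exact closure_contra D h hB _ _ _ ha hb hc hcl (Or.inl ⟨rfl, rfl, rfl⟩)
  · -- f = not
    have ea : (fun i => f (![true, false, false, false, true, true] i)) =
        ![false, true, true, true, false, false] := by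
      funext i; fin_cases i <;> first | exact hf | exact ht
    have eb : (fun i => f (![false, true, false, true, false, true] i)) =
        ![true, false, true, false, true, false] := by
      funext i; fin_cases i <;> first | exact hf | exact ht
    have ec : (fun i => f (![false, false, true, true, true, false] i)) =
        ![true, true, false, false, false, true] := by
      funext i; fin_cases i <;> first | exact hf | exact ht
    rw [ea] at ha; rw [eb] at hb; rw [ec] at hc
    exact closure_contra D h hB _ _ _ ha hb hc hcl (Or.inr ⟨rfl, rfl, rfl⟩)
  · -- f constant true
    have e : (fun i => f (![true, false, false, false, true, true] i)) =
        ![true, true, true, true, true, true] := by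
      funext i; fin_cases i <;> first | exact hf | exact ht
    rw [e] at ha
    exact contra_of_mem D h hB true true ha
end

section
/- Let A, B be types and C an additive abelian group; let ι be an index type, ar : ι → ℕ, and R_A^i ⊆ (Fin (ar i) → A), R_C^i ⊆ (Fin (ar i) → C), R_B^i ⊆ (Fin (ar i) → B) relations. Assume each R_C^i is closed under the pointwise operation (x, y, z) ↦ x − y + z, and f : A → C, g : C → B are homomorphisms. Then for every k ≥ 1, the map p : (Fin (2k+1) → A) → B defined by p(x) = g(∑_{i : Fin (2k+1)} (−1)^(i : ℕ) • f(x i)) is a (2k+1)-ary polymorphism from (A, (R_A^i)) to (B, (R_B^i)), and p is block-symmetric for the partition of Fin (2k+1) into even-indexed and odd-indexed coordinates: for every permutation σ of Fin (2k+1) with (σ i : ℕ) ≡ (i : ℕ) (mod 2) for all i, p(x ∘ σ) = p(x) for all x. (In particular Pol(A, B) contains block-symmetric polymorphisms of width at least k for every k.) -/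
lemma alt_sum_mem {C : Type*} [AddCommGroup C] {n : ℕ} (S : Set (Fin n → C))
    (hS : ∀ t₁ ∈ S, ∀ t₂ ∈ S, ∀ t₃ ∈ S, (fun j => t₁ j - t₂ j + t₃ j) ∈ S)
    (c : ℕ → (Fin n → C)) (hc : ∀ l, c l ∈ S) :
    ∀ m : ℕ, (fun j => ∑ l ∈ Finset.range (2 * m + 1), ((-1 : ℤ) ^ l) • c l j) ∈ S := by
  intro m
  induction m with
  | zero => simpa using hc 0
  | succ m ih =>
    have h := hS _ ih _ (hc (2 * m + 1)) _ (hc (2 * m + 2))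
    convert h using 2 with j
    have : 2 * (m + 1) + 1 = (2 * m + 1) + 1 + 1 := by ring
    rw [this, Finset.sum_range_succ, Finset.sum_range_succ]
    have h1 : ((-1 : ℤ) ^ (2 * m + 1)) = -1 := by
      rw [pow_succ, pow_mul]; simp
    have h2 : ((-1 : ℤ) ^ (2 * m + 1 + 1)) = 1 := by
      rw [pow_succ, h1]; simp
    rw [h1, h2]
    simp [sub_eq_add_neg]

theorem block_symmetric_polymorphisms_of_affine_sandwich
    {A B : Type*} {C : Type*} [AddCommGroup C] {ι : Type*} {ar : ι → ℕ}
    (RA : ∀ i : ι, Set (Fin (ar i) → A))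
    (RC : ∀ i : ι, Set (Fin (ar i) → C))
    (RB : ∀ i : ι, Set (Fin (ar i) → B))
    (hC : ∀ i : ι, ∀ t₁ ∈ RC i, ∀ t₂ ∈ RC i, ∀ t₃ ∈ RC i,
      (fun j => t₁ j - t₂ j + t₃ j) ∈ RC i)
    (f : A → C) (g : C → B)
    (hf : ∀ i : ι, ∀ t ∈ RA i, (fun j => f (t j)) ∈ RC i)
    (hg : ∀ i : ι, ∀ t ∈ RC i, (fun j => g (t j)) ∈ RB i)
    (k : ℕ) (hk : 1 ≤ k) :
    (∀ i : ι, ∀ t : Fin (2 * k + 1) → (Fin (ar i) → A), (∀ l, t l ∈ RA i) →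
      (fun j => g (∑ l : Fin (2 * k + 1), ((-1 : ℤ) ^ (l : ℕ)) • f (t l j))) ∈ RB i) ∧
    (∀ σ : Equiv.Perm (Fin (2 * k + 1)), (∀ l, ((σ l : ℕ)) % 2 = (l : ℕ) % 2) →
      ∀ x : Fin (2 * k + 1) → A,
        g (∑ l : Fin (2 * k + 1), ((-1 : ℤ) ^ (l : ℕ)) • f ((x ∘ σ) l)) =
        g (∑ l : Fin (2 * k + 1), ((-1 : ℤ) ^ (l : ℕ)) • f (x l))) := by
  constructor
  · intro i t ht
    have key := alt_sum_mem (RC i) (hC i)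
      (fun l => if h : l < 2 * k + 1 then (fun j => f (t ⟨l, h⟩ j)) else (fun j => f (t 0 j)))
      (by intro l; split <;> exact hf i _ (ht _)) k
    have heq : (fun j => ∑ l : Fin (2 * k + 1), ((-1 : ℤ) ^ (l : ℕ)) • f (t l j)) ∈ RC i := by
      convert key using 2 with j
      rw [← Fin.sum_univ_eq_sum_range (fun l => ((-1 : ℤ) ^ l) •
        (if h : l < 2 * k + 1 then (fun j => f (t ⟨l, h⟩ j)) else (fun j => f (t 0 j))) j)
        (2 * k + 1)]
      apply Finset.sum_congr rfl
      intro l _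
      simp [l.isLt]
    exact hg i _ heq
  · intro σ hσ x
    congr 1
    have step : ∀ l : Fin (2 * k + 1),
        ((-1 : ℤ) ^ (l : ℕ)) • f ((x ∘ σ) l) = ((-1 : ℤ) ^ ((σ l : ℕ))) • f (x (σ l)) := by
      intro l
      have hp : ((-1 : ℤ) ^ (l : ℕ)) = ((-1 : ℤ) ^ ((σ l : ℕ))) := by
        rw [neg_one_pow_eq_pow_mod_two, ← hσ l, ← neg_one_pow_eq_pow_mod_two]
      rw [hp]; rfl
    rw [Finset.sum_congr rfl (fun l _ => step l)]
    exact Equiv.sum_comp σ (fun l => ((-1 : ℤ) ^ (l : ℕ)) • f (x l))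
end

section
/- Let A, B be types and C a finite additive abelian group with |C| = n; let ι be an index type, ar : ι → ℕ, and R_A^i ⊆ (Fin (ar i) → A), R_C^i ⊆ (Fin (ar i) → C), R_B^i ⊆ (Fin (ar i) → B) relations. Assume each R_C^i is closed under the pointwise operation (x, y, z) ↦ x − y + z, and f : A → C, g : C → B are homomorphisms. Then for every k ≥ 1, the map p : (Fin (n·k + 1) → A) → B defined by p(x) = g(∑_{i : Fin (n·k+1)} f(x i)) is an (n·k+1)-ary polymorphism from (A, (R_A^i)) to (B, (R_B^i)), and p is symmetric: for every permutation σ of Fin (n·k+1) and every x, p(x ∘ σ) = p(x). (In particular Pol(A, B) contains symmetric polymorphisms of arbitrarily large arity.) -/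
theorem symmetric_polymorphisms_of_finite_affine_sandwich
    {A B : Type*} {C : Type*} [AddCommGroup C] [Fintype C] {ι : Type*} {ar : ι → ℕ}
    (n : ℕ) (hn : Fintype.card C = n)
    (RA : ∀ i : ι, Set (Fin (ar i) → A))
    (RC : ∀ i : ι, Set (Fin (ar i) → C))
    (RB : ∀ i : ι, Set (Fin (ar i) → B))
    (hC : ∀ i : ι, ∀ t₁ ∈ RC i, ∀ t₂ ∈ RC i, ∀ t₃ ∈ RC i,
      (fun j => t₁ j - t₂ j + t₃ j) ∈ RC i)
    (f : A → C) (g : C → B)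
    (hf : ∀ i : ι, ∀ t ∈ RA i, (fun j => f (t j)) ∈ RC i)
    (hg : ∀ i : ι, ∀ t ∈ RC i, (fun j => g (t j)) ∈ RB i)
    (k : ℕ) (hk : 1 ≤ k) :
    (∀ i : ι, ∀ t : Fin (n * k + 1) → (Fin (ar i) → A), (∀ l, t l ∈ RA i) →
      (fun j => g (∑ l : Fin (n * k + 1), f (t l j))) ∈ RB i) ∧
    (∀ σ : Equiv.Perm (Fin (n * k + 1)), ∀ x : Fin (n * k + 1) → A,
      g (∑ l : Fin (n * k + 1), f ((x ∘ σ) l)) =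
      g (∑ l : Fin (n * k + 1), f (x l))) := by
  constructor
  · intro i t ht
    -- the images in C
    set T : Fin (n * k + 1) → (Fin (ar i) → C) := fun l j => f (t l j) with hT
    have hTmem : ∀ l, T l ∈ RC i := fun l => hf i (t l) (ht l)
    -- extend to ℕ
    have hpos : 0 < n * k + 1 := Nat.succ_pos _
    set T' : ℕ → (Fin (ar i) → C) := fun l => T ⟨l % (n * k + 1), Nat.mod_lt _ hpos⟩
      with hT'
    have hT'mem : ∀ l, T' l ∈ RC i := fun l => hTmem _
    -- inductive affine claim
    have key : ∀ m : ℕ,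
        (fun j => (∑ l ∈ Finset.range (m + 1), T' l j) - m • T' 0 j) ∈ RC i := by
      intro m
      induction m with
      | zero =>
        have : (fun j => (∑ l ∈ Finset.range 1, T' l j) - 0 • T' 0 j) = T' 0 := by
          funext j; simp
        rw [this]; exact hT'mem 0
      | succ m ih =>
        have h := hC i _ ih _ (hT'mem 0) _ (hT'mem (m + 1))
        have : (fun j => ((∑ l ∈ Finset.range (m + 1), T' l j) - m • T' 0 j)
            - T' 0 j + T' (m + 1) j)
            = fun j => (∑ l ∈ Finset.range (m + 1 + 1), T' l j) - (m + 1) • T' 0 j := by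
          funext j
          conv_rhs => rw [Finset.sum_range_succ, succ_nsmul]
          abel
        rwa [this] at h
    have key' := key (n * k)
    have hzero : ∀ j, (n * k) • T' 0 j = 0 := by
      intro j
      rw [mul_comm, mul_smul]
      rw [← hn]
      simp
    have heq : (fun j => (∑ l ∈ Finset.range (n * k + 1), T' l j) - (n * k) • T' 0 j)
        = fun j => ∑ l : Fin (n * k + 1), f (t l j) := by
      funext j
      rw [hzero j, sub_zero]
      rw [Finset.sum_range fun l => T' l j]
      apply Finset.sum_congr rfl
      intro l _
      simp only [hT', hT, Nat.mod_eq_of_lt l.isLt, Fin.eta]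
    rw [heq] at key'
    exact hg i _ key'
  · intro σ x
    congr 1
    exact Equiv.sum_comp σ (fun l => f (x l))
end
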